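/- Let K : ℝ^d → ℝ be C¹, symmetric (K(x) = K(−x)), and satisfy ⟨∇K(x) − ∇K(y), x−y⟩ ≥ λ|x−y|² for all x,y. Let X₁, X₂ be random variables taking values in a bounded set D ⊂ ℝ^d with laws μ₁, μ₂ respectively. Then E[−⟨X₁ − X₂, (∇K∗μ₁)(X₁) − (∇K∗μ₂)(X₂)⟩] ≤ −min{0,λ} · E[|X₁ − X₂|²]. -/

import Mathlib

open RealInnerProductSpace MeasureTheory

/-! Write `F = ∇K` and `Z = X₁ - X₂`. By Fubini the left side is the expectation, over two
independent copies `ω, ω'` of the coupling, of `-⟪Z ω, F (X₁ ω - X₁ ω') - F (X₂ ω - X₂ ω')⟫`.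
Since `F` is odd, exchanging the copies and averaging turns this into
`-½ ⟪Z ω - Z ω', F a - F b⟫` with `a - b = Z ω - Z ω'`, which `λ`-convexity bounds by
`-(λ/2) ‖Z ω - Z ω'‖²`. Finally `E ‖Z ω - Z ω'‖² = 2 (E ‖Z‖² - ‖E Z‖²)` lies between `0` and
`2 E ‖Z‖²`. -/

section Gradient

variable {E : Type*} [NormedAddCommGroup E] [InnerProductSpace ℝ E] [CompleteSpace E]

theorem gradient_neg_of_even {K : E → ℝ} (hK : ∀ x, K (-x) = K x) (z : E) :
    gradient K (-z) = -gradient K z := by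
  have h := (ContinuousLinearEquiv.neg ℝ : E ≃L[ℝ] E).comp_right_fderiv (f := K) (x := z)
  have hKneg : K ∘ (ContinuousLinearEquiv.neg ℝ : E ≃L[ℝ] E) = K := funext hK
  rw [hKneg] at h
  have : fderiv ℝ K (-z) = -fderiv ℝ K z := by
    rw [h]; ext v; simp
  simp only [gradient, this, map_neg]

theorem ContDiff.continuous_gradient {K : E → ℝ} (hK : ContDiff ℝ 1 K) :
    Continuous (gradient K) :=
  (InnerProductSpace.toDual ℝ E).symm.continuous.comp (hK.continuous_fderiv one_ne_zero)

end Gradient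

theorem le_inner_add_inner_of_odd {E : Type*} [NormedAddCommGroup E] [InnerProductSpace ℝ E]
    {F : E → E} (hodd : ∀ z, F (-z) = -F z) {lam : ℝ}
    (hF : ∀ x y, lam * ‖x - y‖ ^ 2 ≤ ⟪F x - F y, x - y⟫) (x₁ x₂ y₁ y₂ : E) :
    lam * ‖(x₁ - x₂) - (y₁ - y₂)‖ ^ 2 ≤
      ⟪x₁ - x₂, F (x₁ - y₁) - F (x₂ - y₂)⟫ + ⟪y₁ - y₂, F (y₁ - x₁) - F (y₂ - x₂)⟫ := by
  have hsum : ⟪x₁ - x₂, F (x₁ - y₁) - F (x₂ - y₂)⟫ + ⟪y₁ - y₂, F (y₁ - x₁) - F (y₂ - x₂)⟫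
      = ⟪F (x₁ - y₁) - F (x₂ - y₂), (x₁ - y₁) - (x₂ - y₂)⟫ := by
    rw [← neg_sub x₁ y₁, ← neg_sub x₂ y₂, hodd, hodd, neg_sub_neg, ← neg_sub (F (x₁ - y₁)),
      inner_neg_right, ← sub_eq_add_neg, ← inner_sub_left, real_inner_comm]
    congr 1; abel
  rw [hsum, show (x₁ - x₂) - (y₁ - y₂) = (x₁ - y₁) - (x₂ - y₂) by abel]
  exact hF _ _

section Fubini

variable {α β E : Type*} [MeasurableSpace α] [MeasurableSpace β] {μ : Measure α} {ν : Measure β}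
  [NormedAddCommGroup E] [InnerProductSpace ℝ E] [CompleteSpace E]

theorem integral_inner_integral_eq_integral_prod [SFinite μ] [SFinite ν] {V : α → E}
    {G : α → β → E} (hG : Integrable (Function.uncurry G) (μ.prod ν))
    (hVG : Integrable (fun p : α × β => ⟪V p.1, G p.1 p.2⟫) (μ.prod ν)) :
    ∫ x, ⟪V x, ∫ y, G x y ∂ν⟫ ∂μ = ∫ p, ⟪V p.1, G p.1 p.2⟫ ∂(μ.prod ν) := by
  rw [integral_prod _ hVG]
  refine integral_congr_ae ?_
  filter_upwards [hG.prod_right_ae] with x hx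
  exact (integral_inner hx (V x)).symm

theorem integral_prod_norm_sub_sq [IsProbabilityMeasure μ] {Z : α → E} (hZ : MemLp Z 2 μ) :
    ∫ p, ‖Z p.1 - Z p.2‖ ^ 2 ∂(μ.prod μ) = 2 * ∫ x, ‖Z x‖ ^ 2 ∂μ - 2 * ‖∫ x, Z x ∂μ‖ ^ 2 := by
  have hZ₁ : Integrable Z μ := hZ.integrable one_le_two
  have hsq : Integrable (fun x => ‖Z x‖ ^ 2) μ := hZ.integrable_norm_pow'
  have hinner : Integrable (fun p : α × α => ⟪Z p.1, Z p.2⟫) (μ.prod μ) := by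
    refine (hZ₁.norm.mul_prod hZ₁.norm).mono
      ((hZ₁.1.comp_fst).inner (hZ₁.1.comp_snd)) (ae_of_all _ fun p => ?_)
    simpa using abs_real_inner_le_norm (Z p.1) (Z p.2)
  have hmean : ∫ p, ⟪Z p.1, Z p.2⟫ ∂(μ.prod μ) = ‖∫ x, Z x ∂μ‖ ^ 2 := by
    simp_rw [integral_prod _ hinner, integral_inner hZ₁, real_inner_comm (∫ y, Z y ∂μ),
      integral_inner hZ₁, real_inner_self_eq_norm_sq]
  have hsq₁ : Integrable (fun p : α × α => ‖Z p.1‖ ^ 2) (μ.prod μ) := hsq.comp_fst μ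
  have hsq₂ : Integrable (fun p : α × α => ‖Z p.2‖ ^ 2) (μ.prod μ) := hsq.comp_snd μ
  have hinner₂ : Integrable (fun p : α × α => 2 * ⟪Z p.1, Z p.2⟫) (μ.prod μ) := hinner.const_mul 2
  simp_rw [norm_sub_sq_real]
  rw [integral_add (f := fun p => ‖Z p.1‖ ^ 2 - 2 * ⟪Z p.1, Z p.2⟫) (hsq₁.sub hinner₂) hsq₂,
    integral_sub hsq₁ hinner₂, integral_const_mul, hmean, integral_prod _ hsq₁,
    integral_prod _ hsq₂]
  simp only [integral_const, probReal_univ, smul_eq_mul, one_mul]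
  ring

end Fubini

section Coupling

variable {Ω E : Type*} [MeasurableSpace Ω] {ℙ : Measure Ω} [IsProbabilityMeasure ℙ]
  [NormedAddCommGroup E] [InnerProductSpace ℝ E] [CompleteSpace E]
  {F : E → E} {lam : ℝ} {X₁ X₂ : Ω → E}

theorem neg_integral_inner_interaction_le (hodd : ∀ z, F (-z) = -F z)
    (hF : ∀ x y, lam * ‖x - y‖ ^ 2 ≤ ⟪F x - F y, x - y⟫)
    (hZ : MemLp (fun ω => X₁ ω - X₂ ω) 2 ℙ)
    (hG : Integrable (fun p : Ω × Ω => F (X₁ p.1 - X₁ p.2) - F (X₂ p.1 - X₂ p.2)) (ℙ.prod ℙ))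
    (hφ : Integrable (fun p : Ω × Ω =>
      ⟪X₁ p.1 - X₂ p.1, F (X₁ p.1 - X₁ p.2) - F (X₂ p.1 - X₂ p.2)⟫) (ℙ.prod ℙ)) :
    -∫ ω, ⟪X₁ ω - X₂ ω, ∫ ω', F (X₁ ω - X₁ ω') - F (X₂ ω - X₂ ω') ∂ℙ⟫ ∂ℙ
      ≤ -(min 0 lam) * ∫ ω, ‖X₁ ω - X₂ ω‖ ^ 2 ∂ℙ := by
  set φ := fun p : Ω × Ω => ⟪X₁ p.1 - X₂ p.1, F (X₁ p.1 - X₁ p.2) - F (X₂ p.1 - X₂ p.2)⟫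
  set Q := ∫ p : Ω × Ω, ‖(X₁ p.1 - X₂ p.1) - (X₁ p.2 - X₂ p.2)‖ ^ 2 ∂(ℙ.prod ℙ)
  have hfubini : ∫ ω, ⟪X₁ ω - X₂ ω, ∫ ω', F (X₁ ω - X₁ ω') - F (X₂ ω - X₂ ω') ∂ℙ⟫ ∂ℙ
      = ∫ p, φ p ∂(ℙ.prod ℙ) :=
    integral_inner_integral_eq_integral_prod hG hφ
  have hφswap : Integrable (fun p : Ω × Ω => φ p.swap) (ℙ.prod ℙ) := hφ.swap
  have hsymm : 2 * ∫ p, φ p ∂(ℙ.prod ℙ) = ∫ p, (φ p + φ p.swap) ∂(ℙ.prod ℙ) := by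
    rw [integral_add hφ hφswap, integral_prod_swap]; ring
  have hmono : lam * Q ≤ ∫ p, (φ p + φ p.swap) ∂(ℙ.prod ℙ) := by
    rw [← integral_const_mul]
    exact integral_mono (((hZ.comp_fst ℙ).sub (hZ.comp_snd ℙ)).integrable_norm_pow'.const_mul _)
      (hφ.add hφswap) fun p => le_inner_add_inner_of_odd hodd hF _ _ _ _
  have hQ : Q = 2 * ∫ ω, ‖X₁ ω - X₂ ω‖ ^ 2 ∂ℙ - 2 * ‖∫ ω, (X₁ ω - X₂ ω) ∂ℙ‖ ^ 2 :=
    integral_prod_norm_sub_sq hZ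
  have hQ₀ : 0 ≤ Q := integral_nonneg fun p => by positivity
  have hmean₀ : 0 ≤ ‖∫ ω, (X₁ ω - X₂ ω) ∂ℙ‖ ^ 2 := by positivity
  rw [hfubini]
  rcases le_total 0 lam with hlam | hlam
  · rw [min_eq_left hlam]; nlinarith
  · rw [min_eq_right hlam]; nlinarith

theorem integral_neg_inner_interaction_le_of_bounded [MeasurableSpace E] [BorelSpace E]
    [SecondCountableTopology E] {R C : ℝ} (hodd : ∀ z, F (-z) = -F z)
    (hF : ∀ x y, lam * ‖x - y‖ ^ 2 ≤ ⟪F x - F y, x - y⟫) (hFm : Measurable F)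
    (hFC : ∀ z, ‖z‖ ≤ 2 * R → ‖F z‖ ≤ C) (hX₁m : Measurable X₁) (hX₂m : Measurable X₂)
    (hX₁R : ∀ ω, ‖X₁ ω‖ ≤ R) (hX₂R : ∀ ω, ‖X₂ ω‖ ≤ R) :
    ∫ ω, -⟪X₁ ω - X₂ ω, (∫ ω', F (X₁ ω - X₁ ω') ∂ℙ) - ∫ ω', F (X₂ ω - X₂ ω') ∂ℙ⟫ ∂ℙ
      ≤ -(min 0 lam) * ∫ ω, ‖X₁ ω - X₂ ω‖ ^ 2 ∂ℙ := by
  have hdiff : ∀ x y : E, ‖x‖ ≤ R → ‖y‖ ≤ R → ‖x - y‖ ≤ 2 * R :=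
    fun x y hx hy => (norm_sub_le x y).trans (by linarith)
  have hZm : Measurable fun ω => X₁ ω - X₂ ω := hX₁m.sub hX₂m
  have hGm : Measurable fun p : Ω × Ω => F (X₁ p.1 - X₁ p.2) - F (X₂ p.1 - X₂ p.2) :=
    (hFm.comp ((hX₁m.comp measurable_fst).sub (hX₁m.comp measurable_snd))).sub
      (hFm.comp ((hX₂m.comp measurable_fst).sub (hX₂m.comp measurable_snd)))
  have hGC : ∀ p : Ω × Ω, ‖F (X₁ p.1 - X₁ p.2) - F (X₂ p.1 - X₂ p.2)‖ ≤ C + C := fun p =>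
    (norm_sub_le _ _).trans <| add_le_add (hFC _ (hdiff _ _ (hX₁R _) (hX₁R _)))
      (hFC _ (hdiff _ _ (hX₂R _) (hX₂R _)))
  have hZ : MemLp (fun ω => X₁ ω - X₂ ω) 2 ℙ := .of_bound hZm.aestronglyMeasurable (2 * R)
    (ae_of_all _ fun ω => hdiff _ _ (hX₁R ω) (hX₂R ω))
  have hG : Integrable (fun p : Ω × Ω => F (X₁ p.1 - X₁ p.2) - F (X₂ p.1 - X₂ p.2)) (ℙ.prod ℙ) :=
    .of_bound hGm.aestronglyMeasurable (C + C) (ae_of_all _ hGC)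
  have hφ : Integrable (fun p : Ω × Ω =>
      ⟪X₁ p.1 - X₂ p.1, F (X₁ p.1 - X₁ p.2) - F (X₂ p.1 - X₂ p.2)⟫) (ℙ.prod ℙ) := by
    refine .of_bound ((hZm.comp measurable_fst).inner hGm).aestronglyMeasurable (2 * R * (C + C))
      (ae_of_all _ fun p => (norm_inner_le_norm _ _).trans ?_)
    have hZp := hdiff _ _ (hX₁R p.1) (hX₂R p.1)
    exact mul_le_mul hZp (hGC p) (norm_nonneg _) ((norm_nonneg _).trans hZp)
  have hsplit : ∀ ω, (∫ ω', F (X₁ ω - X₁ ω') ∂ℙ) - ∫ ω', F (X₂ ω - X₂ ω') ∂ℙ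
      = ∫ ω', F (X₁ ω - X₁ ω') - F (X₂ ω - X₂ ω') ∂ℙ := fun ω =>
    have hforce : ∀ {X : Ω → E}, Measurable X → (∀ ω, ‖X ω‖ ≤ R) →
        Integrable (fun ω' => F (X ω - X ω')) ℙ := fun hXm hXR =>
      .of_bound (hFm.comp (measurable_const.sub hXm)).aestronglyMeasurable C
        (ae_of_all _ fun ω' => hFC _ (hdiff _ _ (hXR ω) (hXR ω')))
    (integral_sub (hforce hX₁m hX₁R) (hforce hX₂m hX₂R)).symm
  simp_rw [hsplit, integral_neg]
  exact neg_integral_inner_interaction_le hodd hF hZ hG hφ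

end Coupling

/-- Lemma 3.3 (coupling estimate for λ-convex symmetric interaction potentials):
for random variables `X₁, X₂` with values in a bounded set `D` and laws `μ₁, μ₂`,
`E[-⟪X₁ - X₂, ∇K∗μ₁(X₁) - ∇K∗μ₂(X₂)⟫] ≤ -min 0 λ · E[‖X₁ - X₂‖²]`. -/
theorem interaction_convexity_coupling_estimate
    {d : ℕ} {D : Set (EuclideanSpace ℝ (Fin d))} (hDb : Bornology.IsBounded D)
    (K : EuclideanSpace ℝ (Fin d) → ℝ) (hK : ContDiff ℝ 1 K)
    (hKsymm : ∀ x, K x = K (-x))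
    (lam : ℝ)
    (hKconv : ∀ x y, ⟪gradient K x - gradient K y, x - y⟫ ≥ lam * ‖x - y‖ ^ 2)
    {Ω : Type*} [MeasurableSpace Ω] (ℙ : Measure Ω) [IsProbabilityMeasure ℙ]
    (X₁ X₂ : Ω → EuclideanSpace ℝ (Fin d))
    (hX₁m : Measurable X₁) (hX₂m : Measurable X₂)
    (hX₁D : ∀ ω, X₁ ω ∈ D) (hX₂D : ∀ ω, X₂ ω ∈ D)
    (μ₁ μ₂ : Measure (EuclideanSpace ℝ (Fin d)))
    (hμ₁ : μ₁ = Measure.map X₁ ℙ) (hμ₂ : μ₂ = Measure.map X₂ ℙ) :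
    ∫ ω, -⟪X₁ ω - X₂ ω,
        (∫ y, gradient K (X₁ ω - y) ∂μ₁) - (∫ y, gradient K (X₂ ω - y) ∂μ₂)⟫ ∂ℙ
      ≤ -(min 0 lam) * ∫ ω, ‖X₁ ω - X₂ ω‖ ^ 2 ∂ℙ := by
  obtain ⟨R, hR⟩ := hDb.exists_norm_le
  have hFc : Continuous (gradient K) := hK.continuous_gradient
  obtain ⟨C, hC⟩ :=
    (isCompact_closedBall 0 (2 * R)).exists_bound_of_continuousOn hFc.continuousOn
  have hlaw : ∀ {X : Ω → EuclideanSpace ℝ (Fin d)}, Measurable X → ∀ x,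
      ∫ y, gradient K (x - y) ∂(ℙ.map X) = ∫ ω', gradient K (x - X ω') ∂ℙ := fun hX x =>
    integral_map hX.aemeasurable
      (hFc.comp (continuous_const.sub continuous_id)).aestronglyMeasurable
  subst hμ₁ hμ₂
  simp only [hlaw hX₁m, hlaw hX₂m]
  exact integral_neg_inner_interaction_le_of_bounded
    (gradient_neg_of_even fun x => (hKsymm x).symm) hKconv hFc.measurable
    (fun z hz => hC z (by simpa using hz)) hX₁m hX₂m
    (fun ω => hR _ (hX₁D ω)) (fun ω => hR _ (hX₂D ω))
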